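/- arXiv:2503.06369 — 2 statements merged into one kernel-verified Lean document; each statement's English description precedes it below -/
import Mathlib

section
/- Let A be an invertible N×N real matrix, B ∈ ℝ^N, x₀ ∈ ℝ, h₀ ∈ ℝ^N, and Δ > 0. If h : ℝ → ℝ^N is differentiable with derivative h'(s) = A *ᵥ h(s) + x₀ • B for all s ∈ [0, Δ] and h(0) = h₀, then h(Δ) = exp(Δ • A) *ᵥ h₀ + x₀ • (A⁻¹ * (exp(Δ • A) − I)) *ᵥ B. That is, the zero-order hold discretization Ā = exp(ΔA), B̄ = (ΔA)⁻¹(exp(ΔA) − I)ΔB reproduces the continuous state space system exactly over a step of length Δ with constant input. -/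
open Matrix NormedSpace

attribute [local instance] Matrix.linftyOpNormedAddCommGroup Matrix.linftyOpNormedRing
  Matrix.linftyOpNormedAlgebra

noncomputable def mvL {N : ℕ} : Matrix (Fin N) (Fin N) ℝ →L[ℝ] ((Fin N → ℝ) →L[ℝ] (Fin N → ℝ)) :=
  LinearMap.toContinuousLinearMap
    { toFun := fun M => LinearMap.toContinuousLinearMap (Matrix.mulVecLin M)
      map_add' := by intro M M'; ext v i; simp [Matrix.add_mulVec]
      map_smul' := by intro c M; ext v i; simp [Matrix.smul_mulVec] }

lemma mvL_apply {N : ℕ} (M : Matrix (Fin N) (Fin N) ℝ) (v : Fin N → ℝ) :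
    mvL M v = M *ᵥ v := by simp [mvL]

theorem zoh_discretization_exact {N : ℕ}
    (A : Matrix (Fin N) (Fin N) ℝ) (hA : IsUnit A)
    (B : Fin N → ℝ) (x₀ : ℝ) (h₀ : Fin N → ℝ) (Δ : ℝ) (hΔ : 0 < Δ)
    (h : ℝ → (Fin N → ℝ))
    (hderiv : ∀ s ∈ Set.Icc (0 : ℝ) Δ, HasDerivAt h (A *ᵥ h s + x₀ • B) s)
    (hinit : h 0 = h₀) :
    h Δ = (NormedSpace.exp (Δ • A)) *ᵥ h₀ +
      x₀ • ((A⁻¹ * (NormedSpace.exp (Δ • A) - 1)) *ᵥ B) := by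
  have hdet : IsUnit A.det := (Matrix.isUnit_iff_isUnit_det A).mp hA
  set c : Fin N → ℝ := x₀ • (A⁻¹ *ᵥ B) with hc
  set f : ℝ → (Fin N → ℝ) := fun t => mvL (exp ((-t) • A)) (h t + c) with hf
  -- derivative of f is zero on Icc
  have hfderiv : ∀ t ∈ Set.Icc (0:ℝ) Δ, HasDerivAt f 0 t := by
    intro t ht
    have hexp : HasDerivAt (fun u : ℝ => exp (u • A)) (exp ((-t) • A) * A) (-t) :=
      hasDerivAt_exp_smul_const A (-t)
    have hneg : HasDerivAt (fun u : ℝ => -u) (-1) t := (hasDerivAt_neg t)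
    have hE : HasDerivAt (fun u : ℝ => exp ((-u) • A)) (-(exp ((-t) • A) * A)) t := by
      have := hexp.scomp t hneg
      simp only [Function.comp_def, neg_smul, one_smul] at this ⊢
      exact this
    have hLE : HasDerivAt (fun u : ℝ => mvL (exp ((-u) • A)))
        (mvL (-(exp ((-t) • A) * A))) t :=
      (mvL.hasFDerivAt.comp_hasDerivAt t hE)
    have hv : HasDerivAt (fun u => h u + c) (A *ᵥ h t + x₀ • B) t :=
      (hderiv t ht).add_const _
    have := hLE.clm_apply hv
    convert this using 1
    · rfl
    · rfl
    · rfl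
    rw [mvL_apply, mvL_apply]
    rw [Matrix.neg_mulVec]
    have h1 : (exp ((-t) • A) * A) *ᵥ (h t + c) =
        exp ((-t) • A) *ᵥ (A *ᵥ h t + x₀ • B) := by
      rw [← Matrix.mulVec_mulVec]
      rw [Matrix.mulVec_add, hc, Matrix.mulVec_smul, Matrix.mulVec_mulVec,
        Matrix.mul_nonsing_inv A hdet, Matrix.one_mulVec]
    rw [h1]
    abel
  -- f is constant on Icc
  have hconst : f Δ = f 0 := by
    have := eq_of_has_deriv_right_eq (f' := fun _ => (0 : Fin N → ℝ))
      (fun x hx => ((hfderiv x ⟨hx.1, hx.2.le⟩).hasDerivWithinAt))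
      (fun x _ => (hasDerivAt_const x (f 0)).hasDerivWithinAt)
      (fun x hx => (hfderiv x hx).continuousAt.continuousWithinAt)
      (continuousOn_const) rfl
    exact this Δ ⟨hΔ.le, le_rfl⟩
  -- unfold
  have hcomm : Commute (Δ • A) ((-Δ) • A) := ((Commute.refl A).smul_left Δ).smul_right (-Δ)
  have hmul : exp (Δ • A) * exp ((-Δ) • A) = 1 := by
    rw [← Matrix.exp_add_of_commute _ _ hcomm]
    simp [← add_smul]
  have key : h Δ + c = exp (Δ • A) *ᵥ (h₀ + c) := by
    have h0 : f 0 = h 0 + c := by simp [hf, mvL_apply]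
    have hDl : f Δ = exp ((-Δ) • A) *ᵥ (h Δ + c) := by simp [hf, mvL_apply]
    have := hconst
    rw [hDl, h0, hinit] at this
    calc h Δ + c = (exp (Δ • A) * exp ((-Δ) • A)) *ᵥ (h Δ + c) := by
          rw [hmul, Matrix.one_mulVec]
      _ = exp (Δ • A) *ᵥ (exp ((-Δ) • A) *ᵥ (h Δ + c)) := by
          rw [Matrix.mulVec_mulVec]
      _ = exp (Δ • A) *ᵥ (h₀ + c) := by rw [this]
  have hAinv : Commute A⁻¹ (exp (Δ • A)) := by
    have h1 : Commute A⁻¹ A := by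
      unfold Commute SemiconjBy
      rw [Matrix.nonsing_inv_mul A hdet, Matrix.mul_nonsing_inv A hdet]
    exact (h1.smul_right Δ).exp_right
  have hstep : h Δ = exp (Δ • A) *ᵥ h₀ + (exp (Δ • A) *ᵥ c - c) := by
    have h2 := eq_sub_of_add_eq key
    rw [h2, Matrix.mulVec_add]
    abel
  rw [hstep]
  congr 1
  rw [hc, Matrix.mulVec_smul, ← smul_sub]
  congr 1
  rw [Matrix.mulVec_mulVec, Matrix.mul_sub, Matrix.mul_one, Matrix.sub_mulVec, hAinv.eq]
end

section
/- (Main theorem: patch-traversal rotation invariance of the Spectral Traversal Scan.) Let f : Fin N → EuclideanSpace ℝ (Fin d) be patch features, s > 0 a scale, and σ a permutation of Fin N (the relabeling of patches induced by a rotation), and assume the features are invariant under the rotation, i.e., the rotated image has features g = f ∘ σ⁻¹. Assume all degrees of W(f) are strictly positive. If u ∈ ℝ^N satisfies L_sym(W(f)) *ᵥ u = λ • u and u is injective, then: (1) u' = u ∘ σ⁻¹ satisfies L_sym(W(g)) *ᵥ u' = λ • u'; and (2) if e : Fin N → Fin N is the unique bijection with k ↦ u(e(k)) strictly increasing, then σ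 ∘ e is the unique bijection with k ↦ u'((σ ∘ e)(k)) strictly increasing. Hence the spectral traversal visits the same patches in the same order before and after the rotation. -/
open Matrix

/-- Gaussian adjacency matrix: `W(f)_{ij} = exp(−‖f i − f j‖² / (2 s²))`. -/
noncomputable def gaussW {N d : ℕ} (s : ℝ) (f : Fin N → EuclideanSpace ℝ (Fin d)) :
    Matrix (Fin N) (Fin N) ℝ :=
  Matrix.of fun i j => Real.exp (-(‖f i - f j‖ ^ 2) / (2 * s ^ 2))

/-- Degree of node `i` in `W`: the sum of the `i`-th row. -/
def deg {N : ℕ} (W : Matrix (Fin N) (Fin N) ℝ) (i : Fin N) : ℝ := ∑ j, W i j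

/-- Symmetric normalized Laplacian `L_sym(W) = I − D^{−1/2} W D^{−1/2}`. -/
noncomputable def Lsym {N : ℕ} (W : Matrix (Fin N) (Fin N) ℝ) : Matrix (Fin N) (Fin N) ℝ :=
  1 - Matrix.diagonal (fun i => (Real.sqrt (deg W i))⁻¹) * W *
        Matrix.diagonal (fun i => (Real.sqrt (deg W i))⁻¹)

/-!
Relabelling the patches by `σ` conjugates the Gaussian adjacency matrix by the permutation
matrix of `σ`; degrees, the normalized Laplacian and hence its eigenvectors are carried along.
If `u ∘ e` is strictly monotone, `e` is injective, hence a bijection of `Fin N`, so `u ∘ e` has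
the same range as `u`; a strictly monotone map out of `Fin N` is determined by its range, so the
sorting bijection is unique, and the one of `u ∘ σ⁻¹` is `σ ∘ e`.
-/

section Sorting

variable {α β : Type*} [LinearOrder α] [Finite α] [Preorder β]

theorem bijective_of_strictMono_comp {u : α → β} {g : α → α}
    (hg : StrictMono (u ∘ g)) : Function.Bijective g :=
  Finite.injective_iff_bijective.mp hg.injective.of_comp

theorem eq_of_strictMono_comp {u : α → β} {g h : α → α}
    (hg : StrictMono (u ∘ g)) (hh : StrictMono (u ∘ h)) : g = h := by
  have hg_surj := (bijective_of_strictMono_comp hg).surjective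
  have hh_surj := (bijective_of_strictMono_comp hh).surjective
  have hu : Function.Injective u := hg.injective.of_comp_right hg_surj
  have h_range : Set.range (u ∘ g) = Set.range (u ∘ h) := by
    rw [Set.range_comp, Set.range_comp, hg_surj.range_eq, hh_surj.range_eq]
  exact hu.comp_left ((hg.range_inj hh).mp h_range)

end Sorting

section Relabelling

variable {N : ℕ}

theorem gaussW_comp_perm {d : ℕ} (s : ℝ) (f : Fin N → EuclideanSpace ℝ (Fin d))
    (σ : Equiv.Perm (Fin N)) : gaussW s (f ∘ σ) = (gaussW s f).submatrix σ σ :=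
  rfl

theorem deg_submatrix_perm (W : Matrix (Fin N) (Fin N) ℝ) (σ : Equiv.Perm (Fin N)) (i : Fin N) :
    deg (W.submatrix σ σ) i = deg W (σ i) :=
  Equiv.sum_comp σ (W (σ i))

theorem Lsym_submatrix_perm (W : Matrix (Fin N) (Fin N) ℝ) (σ : Equiv.Perm (Fin N)) :
    Lsym (W.submatrix σ σ) = (Lsym W).submatrix σ σ := by
  have hdiag : Matrix.diagonal (fun i => (Real.sqrt (deg (W.submatrix σ σ) i))⁻¹) =
      (Matrix.diagonal fun i => (Real.sqrt (deg W i))⁻¹).submatrix σ σ := by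
    rw [submatrix_diagonal_equiv]
    simp only [deg_submatrix_perm, Function.comp_def]
  rw [Lsym, Lsym, hdiag, submatrix_mul_equiv, submatrix_mul_equiv]
  nth_rw 1 [← submatrix_one_equiv σ]
  rfl

theorem Lsym_gaussW_comp_perm_mulVec {d : ℕ} (s : ℝ) (f : Fin N → EuclideanSpace ℝ (Fin d))
    (σ : Equiv.Perm (Fin N)) (u : Fin N → ℝ) :
    Lsym (gaussW s (f ∘ σ)) *ᵥ (u ∘ σ) = (Lsym (gaussW s f) *ᵥ u) ∘ σ := by
  rw [gaussW_comp_perm, Lsym_submatrix_perm, submatrix_mulVec_equiv, Function.comp_assoc,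
    Equiv.self_comp_symm, Function.comp_id]

end Relabelling

theorem spectral_traversal_rotation_invariant_general {N d : ℕ}
    (f : Fin N → EuclideanSpace ℝ (Fin d)) (s : ℝ)
    (σ : Equiv.Perm (Fin N))
    (u : Fin N → ℝ) (lam : ℝ)
    (hu : Lsym (gaussW s f) *ᵥ u = lam • u)
    (e : Fin N → Fin N)
    (hmono : StrictMono fun k => u (e k)) :
    (Lsym (gaussW s (f ∘ σ.symm)) *ᵥ (u ∘ σ.symm) = lam • (u ∘ σ.symm)) ∧
    Function.Bijective (σ ∘ e) ∧
    StrictMono (fun k => (u ∘ σ.symm) ((σ ∘ e) k)) ∧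
    (∀ e' : Fin N → Fin N, Function.Bijective e' →
      StrictMono (fun k => (u ∘ σ.symm) (e' k)) → e' = σ ∘ e) := by
  have hmono' : StrictMono ((u ∘ σ.symm) ∘ (σ ∘ e)) := by
    simpa [Function.comp_def] using hmono
  refine ⟨?_, σ.bijective.comp (bijective_of_strictMono_comp hmono), hmono', ?_⟩
  · rw [Lsym_gaussW_comp_perm_mulVec, hu]
    rfl
  · intro e' _ hmono_e'
    exact eq_of_strictMono_comp hmono_e' hmono'

/-- Patch-traversal rotation invariance of the Spectral Traversal Scan. -/
theorem spectral_traversal_rotation_invariant {N d : ℕ}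
    (f : Fin N → EuclideanSpace ℝ (Fin d)) (s : ℝ) (hs : 0 < s)
    (σ : Equiv.Perm (Fin N))
    (hdeg : ∀ i, 0 < deg (gaussW s f) i)
    (u : Fin N → ℝ) (lam : ℝ)
    (hu : Lsym (gaussW s f) *ᵥ u = lam • u)
    (huinj : Function.Injective u)
    (e : Fin N → Fin N) (he : Function.Bijective e)
    (hmono : StrictMono fun k => u (e k)) :
    (Lsym (gaussW s (f ∘ σ.symm)) *ᵥ (u ∘ σ.symm) = lam • (u ∘ σ.symm)) ∧
    Function.Bijective (σ ∘ e) ∧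
    StrictMono (fun k => (u ∘ σ.symm) ((σ ∘ e) k)) ∧
    (∀ e' : Fin N → Fin N, Function.Bijective e' →
      StrictMono (fun k => (u ∘ σ.symm) (e' k)) → e' = σ ∘ e) :=
  spectral_traversal_rotation_invariant_general f s σ u lam hu e hmono
end
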